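/- A sequence {X_n}_{n=1}^∞ of mm-spaces with total measures m_n is a Lévy family if and only if Sep(X_n; κ, κ) → 0 as n → ∞ for every κ > 0. -/

import Mathlib

open MeasureTheory Metric Filter ENNReal

/-- Distance between two subsets of a (pseudo-e)metric space. -/
noncomputable def setEDist {α : Type*} [PseudoEMetricSpace α] (A B : Set α) : ℝ≥0∞ :=
  ⨅ (a ∈ A) (b ∈ B), edist a b

/-- Partial diameter of a measure: infimum of diameters of Borel sets of measure at least `a`. -/
noncomputable def partialDiam {Y : Type*} [PseudoEMetricSpace Y] [MeasurableSpace Y]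
    (ν : Measure Y) (a : ℝ≥0∞) : ℝ≥0∞ :=
  ⨅ (s : Set Y) (_ : MeasurableSet s) (_ : a ≤ ν s), EMetric.diam s

/-- Observable diameter `diam (X ⟶_{Lip₁} Y, m - κ)` of an mm-space `(X, μ)` with screen `Y`. -/
noncomputable def obsDiam {X : Type*} [PseudoMetricSpace X] [MeasurableSpace X]
    (Y : Type*) [PseudoMetricSpace Y] [MeasurableSpace Y]
    (μ : Measure X) (κ : ℝ) : ℝ≥0∞ :=
  ⨆ (f : X → Y) (_ : LipschitzWith 1 f),
    partialDiam (Measure.map f μ) (μ Set.univ - ENNReal.ofReal κ)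

/-- Separation distance `Sep (X; κ₀, κ₁)`. -/
noncomputable def sep {X : Type*} [PseudoMetricSpace X] [MeasurableSpace X]
    (μ : Measure X) (κ₀ κ₁ : ℝ) : ℝ≥0∞ :=
  ⨆ (A : Set X) (B : Set X) (_ : MeasurableSet A) (_ : MeasurableSet B)
    (_ : ENNReal.ofReal κ₀ ≤ μ A) (_ : ENNReal.ofReal κ₁ ≤ μ B), setEDist A B

/-- A sequence of mm-spaces is a Lévy family if the observable diameters with screen `ℝ`
tend to `0` for every `κ > 0`. -/
def IsLevyFamily (X : ℕ → Type*) [∀ n, MetricSpace (X n)] [∀ n, MeasurableSpace (X n)]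
    (μ : ∀ n, Measure (X n)) : Prop :=
  ∀ κ : ℝ, 0 < κ → Tendsto (fun n => obsDiam ℝ (μ n) κ) atTop (nhds 0)

/-- Monotonicity helper. -/
lemma one_div_succ_le {i j : ℕ} (h : i ≤ j) : 1 / ((j : ℝ) + 1) ≤ 1 / ((i : ℝ) + 1) := by
  have hij : (i : ℝ) ≤ (j : ℝ) := Nat.cast_le.2 h
  apply one_div_le_one_div_of_le <;> linarith

/-- `Sep(X; κ, κ) ≤ ObsDiam(X; κ')` for `0 < κ' < κ`. -/
lemma sep_le_obsDiam {X : Type*} [MetricSpace X] [MeasurableSpace X] [BorelSpace X]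
    (μ : Measure X) [IsFiniteMeasure μ] {κ' κ : ℝ} (hκ' : 0 < κ') (hκ : κ' < κ) :
    sep μ κ κ ≤ obsDiam ℝ μ κ' := by
  refine iSup_le fun A => iSup_le fun B => iSup_le fun hA => iSup_le fun hB =>
    iSup_le fun hμA => iSup_le fun hμB => ?_
  have hκpos : (0 : ℝ≥0∞) < ENNReal.ofReal κ := ENNReal.ofReal_pos.2 (hκ'.trans hκ)
  have hAne : A.Nonempty := nonempty_of_measure_ne_zero
    (fun h0 => hκpos.not_ge (h0 ▸ hμA))
  set f : X → ℝ := fun x => infDist x A with hfdef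
  have hf : LipschitzWith 1 f := lipschitz_infDist_pt A
  have hfm : Measurable f := hf.continuous.measurable
  refine le_trans ?_ (le_iSup_of_le f (le_iSup_of_le hf le_rfl))
  refine le_iInf fun S => le_iInf fun hS => le_iInf fun hνS => ?_
  rw [Measure.map_apply hfm hS] at hνS
  set m := μ Set.univ with hm
  have hκm : ENNReal.ofReal κ ≤ m := le_trans hμA (measure_mono (Set.subset_univ A))
  have hκκ' : ENNReal.ofReal κ' < ENNReal.ofReal κ :=
    (ENNReal.ofReal_lt_ofReal_iff (hκ'.trans hκ)).2 hκ
  have hsubne : m - ENNReal.ofReal κ' ≠ ∞ :=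
    (tsub_le_self.trans_lt (measure_lt_top μ _)).ne
  have hmlt : m < ENNReal.ofReal κ + (m - ENNReal.ofReal κ') := by
    calc m = (m - ENNReal.ofReal κ') + ENNReal.ofReal κ' :=
          (tsub_add_cancel_of_le (le_trans hκκ'.le hκm)).symm
      _ < (m - ENNReal.ofReal κ') + ENNReal.ofReal κ :=
          ENNReal.add_lt_add_left hsubne hκκ'
      _ = ENNReal.ofReal κ + (m - ENNReal.ofReal κ') := add_comm _ _
  have hkey : ∀ C : Set X, MeasurableSet C → ENNReal.ofReal κ ≤ μ C →
      (C ∩ f ⁻¹' S).Nonempty := by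
    intro C hC hμC
    rw [Set.nonempty_iff_ne_empty]
    intro hemp
    have hdisj : Disjoint C (f ⁻¹' S) := Set.disjoint_iff_inter_eq_empty.2 hemp
    have hle : μ C + μ (f ⁻¹' S) ≤ m := by
      rw [← measure_union hdisj (hfm hS)]
      exact measure_mono (Set.subset_univ _)
    exact hmlt.not_ge (le_trans (add_le_add hμC hνS) hle)
  obtain ⟨a, haA, haS⟩ := hkey A hA hμA
  obtain ⟨b, hbB, hbS⟩ := hkey B hB hμB
  have hfa : f a = 0 := infDist_zero_of_mem haA
  have h1 : setEDist A B ≤ EMetric.infEdist b A := by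
    rw [EMetric.infEdist]
    refine le_iInf₂ fun x hx => ?_
    rw [edist_comm]
    exact iInf₂_le_of_le x hx (iInf₂_le b hbB)
  have hEne : EMetric.infEdist b A ≠ ∞ := by
    obtain ⟨z, hz⟩ := hAne
    exact ((EMetric.infEdist_le_edist_of_mem hz).trans_lt (edist_lt_top b z)).ne
  have h2 : EMetric.infEdist b A = edist (f a) (f b) := by
    rw [hfa, edist_dist, Real.dist_eq, hfdef]
    simp only [zero_sub, abs_neg]
    rw [abs_of_nonneg infDist_nonneg, Metric.infDist]
    exact (ENNReal.ofReal_toReal hEne).symm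
  calc setEDist A B ≤ edist (f a) (f b) := h2 ▸ h1
    _ ≤ EMetric.diam S := EMetric.edist_le_diam_of_mem haS hbS

/-- `ObsDiam(X; κ) ≤ Sep(X; κ/2, κ/2)` for `κ > 0`. -/
lemma obsDiam_le_sep {X : Type*} [MetricSpace X] [MeasurableSpace X] [BorelSpace X]
    (μ : Measure X) [IsFiniteMeasure μ] {κ : ℝ} (hκ : 0 < κ) :
    obsDiam ℝ μ κ ≤ sep μ (κ / 2) (κ / 2) := by
  refine iSup_le fun f => iSup_le fun hf => ?_
  have hfm : Measurable f := hf.continuous.measurable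
  set ν := Measure.map f μ with hν
  set m := μ Set.univ with hm
  have hν_univ : ν Set.univ = m := by
    rw [hν, Measure.map_apply hfm MeasurableSet.univ, Set.preimage_univ]
  have hν_fin : ∀ s : Set ℝ, ν s ≠ ∞ := fun s =>
    ((measure_mono (Set.subset_univ s)).trans_lt (hν_univ ▸ measure_lt_top μ _)).ne
  by_cases hcase : m ≤ ENNReal.ofReal κ
  · have h0 : m - ENNReal.ofReal κ = 0 := tsub_eq_zero_of_le hcase
    rw [h0]
    refine le_trans (iInf_le_of_le ∅ (iInf_le_of_le MeasurableSet.empty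
      (iInf_le_of_le (zero_le) ?_))) (zero_le)
    exact (Metric.ediam_empty (X := ℝ)).le
  push_neg at hcase
  set κ2 := ENNReal.ofReal (κ / 2) with hκ2
  have hκ2pos : 0 < κ2 := ENNReal.ofReal_pos.2 (by linarith)
  have hκsum : ENNReal.ofReal κ = κ2 + κ2 := by
    rw [hκ2, ← ENNReal.ofReal_add (by linarith) (by linarith)]
    norm_num
  have hκ2m : κ2 < m := ((hκsum ▸ self_le_add_right κ2 κ2).trans_lt hcase)
  -- the set T of right cut points
  set T : Set ℝ := {t : ℝ | κ2 ≤ ν (Set.Iic t)} with hT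
  have hT_ne : T.Nonempty := by
    have hU : (⋃ n : ℕ, Set.Iic (n : ℝ)) = Set.univ := by
      ext x
      simp only [Set.mem_iUnion, Set.mem_Iic, Set.mem_univ, iff_true]
      exact exists_nat_ge x
    have hdir : Directed (· ⊆ ·) fun n : ℕ => Set.Iic (n : ℝ) := by
      intro i j
      exact ⟨max i j, Set.Iic_subset_Iic.2 (Nat.cast_le.2 (le_max_left i j)),
        Set.Iic_subset_Iic.2 (Nat.cast_le.2 (le_max_right i j))⟩
    have hsup : ν Set.univ = ⨆ n : ℕ, ν (Set.Iic (n : ℝ)) := by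
      rw [← hU, Directed.measure_iUnion hdir]
    have : κ2 < ⨆ n : ℕ, ν (Set.Iic (n : ℝ)) := by
      rw [← hsup, hν_univ]; exact hκ2m
    obtain ⟨n, hn⟩ := lt_iSup_iff.1 this
    exact ⟨(n : ℝ), hn.le⟩
  have hT_bdd : BddBelow T := by
    have hI : (⋂ n : ℕ, Set.Iic (-(n : ℝ))) = ∅ := by
      ext x
      simp only [Set.mem_iInter, Set.mem_Iic, Set.mem_empty_iff_false, iff_false, not_forall,
        not_le]
      obtain ⟨n, hn⟩ := exists_nat_gt (-x)
      exact ⟨n, by linarith⟩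
    have hdir : Directed (· ⊇ ·) fun n : ℕ => Set.Iic (-(n : ℝ)) := by
      intro i j
      refine ⟨max i j, ?_, ?_⟩ <;>
        · intro x hx
          simp only [Set.mem_Iic] at hx ⊢
          refine hx.trans (neg_le_neg ?_)
          exact_mod_cast le_max_iff.2 (by omega)
    have hinf : ν (⋂ n : ℕ, Set.Iic (-(n : ℝ))) = ⨅ n : ℕ, ν (Set.Iic (-(n : ℝ))) :=
      Directed.measure_iInter (fun n => measurableSet_Iic.nullMeasurableSet) hdir
        ⟨0, hν_fin _⟩
    have : (⨅ n : ℕ, ν (Set.Iic (-(n : ℝ)))) < κ2 := by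
      rw [← hinf, hI, measure_empty]; exact hκ2pos
    obtain ⟨n, hn⟩ := iInf_lt_iff.1 this
    refine ⟨-(n : ℝ), fun t ht => ?_⟩
    by_contra hlt
    push_neg at hlt
    exact absurd (le_trans ht (measure_mono (Set.Iic_subset_Iic.2 hlt.le))) hn.not_ge
  set a := sInf T with ha_def
  have ha : κ2 ≤ ν (Set.Iic a) := by
    have hIic : Set.Iic a = ⋂ n : ℕ, Set.Iic (a + 1 / ((n : ℝ) + 1)) := by
      ext x
      simp only [Set.mem_iInter, Set.mem_Iic]
      constructor
      · intro hx n
        have : (0 : ℝ) < 1 / ((n : ℝ) + 1) := by positivity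
        linarith
      · intro hx
        refine le_of_forall_pos_le_add fun ε hε => ?_
        obtain ⟨n, hn⟩ := exists_nat_one_div_lt hε
        exact (hx n).trans (by linarith)
    have hdir : Directed (· ⊇ ·) fun n : ℕ => Set.Iic (a + 1 / ((n : ℝ) + 1)) := by
      intro i j
      refine ⟨max i j, Set.Iic_subset_Iic.2 ?_, Set.Iic_subset_Iic.2 ?_⟩
      · have := one_div_succ_le (le_max_left i j); linarith
      · have := one_div_succ_le (le_max_right i j); linarith
    rw [hIic, Directed.measure_iInter (fun n => measurableSet_Iic.nullMeasurableSet) hdir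
      ⟨0, hν_fin _⟩]
    refine le_iInf fun n => ?_
    have hlt : sInf T < a + 1 / ((n : ℝ) + 1) := by
      rw [← ha_def]
      have : (0 : ℝ) < 1 / ((n : ℝ) + 1) := by positivity
      linarith
    obtain ⟨t, htT, htlt⟩ := exists_lt_of_csInf_lt hT_ne hlt
    exact le_trans htT (measure_mono (Set.Iic_subset_Iic.2 htlt.le))
  have hIio : ν (Set.Iio a) ≤ κ2 := by
    have hIio_eq : Set.Iio a = ⋃ n : ℕ, Set.Iic (a - 1 / ((n : ℝ) + 1)) := by
      ext x
      simp only [Set.mem_iUnion, Set.mem_Iic, Set.mem_Iio]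
      constructor
      · intro hx
        obtain ⟨n, hn⟩ := exists_nat_one_div_lt (sub_pos.2 hx)
        exact ⟨n, by linarith⟩
      · rintro ⟨n, hn⟩
        have : (0 : ℝ) < 1 / ((n : ℝ) + 1) := by positivity
        linarith
    have hdir : Directed (· ⊆ ·) fun n : ℕ => Set.Iic (a - 1 / ((n : ℝ) + 1)) := by
      intro i j
      refine ⟨max i j, Set.Iic_subset_Iic.2 ?_, Set.Iic_subset_Iic.2 ?_⟩
      · have := one_div_succ_le (le_max_left i j); linarith
      · have := one_div_succ_le (le_max_right i j); linarith
    rw [hIio_eq, Directed.measure_iUnion hdir]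
    refine iSup_le fun n => ?_
    have hnotT : a - 1 / ((n : ℝ) + 1) ∉ T := by
      intro hmem
      have := csInf_le hT_bdd hmem
      have hpos : (0 : ℝ) < 1 / ((n : ℝ) + 1) := by positivity
      rw [← ha_def] at this
      linarith
    exact (not_le.1 hnotT).le
  -- the set T' of left cut points
  set T' : Set ℝ := {t : ℝ | κ2 ≤ ν (Set.Ici t)} with hT'
  have hT'_ne : T'.Nonempty := by
    have hU : (⋃ n : ℕ, Set.Ici (-(n : ℝ))) = Set.univ := by
      ext x
      simp only [Set.mem_iUnion, Set.mem_Ici, Set.mem_univ, iff_true]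
      obtain ⟨n, hn⟩ := exists_nat_ge (-x)
      exact ⟨n, by linarith⟩
    have hdir : Directed (· ⊆ ·) fun n : ℕ => Set.Ici (-(n : ℝ)) := by
      intro i j
      refine ⟨max i j, Set.Ici_subset_Ici.2 ?_, Set.Ici_subset_Ici.2 ?_⟩ <;>
        · refine neg_le_neg ?_
          exact_mod_cast le_max_iff.2 (by omega)
    have hsup : ν Set.univ = ⨆ n : ℕ, ν (Set.Ici (-(n : ℝ))) := by
      rw [← hU, Directed.measure_iUnion hdir]
    have : κ2 < ⨆ n : ℕ, ν (Set.Ici (-(n : ℝ))) := by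
      rw [← hsup, hν_univ]; exact hκ2m
    obtain ⟨n, hn⟩ := lt_iSup_iff.1 this
    exact ⟨-(n : ℝ), hn.le⟩
  have hT'_bdd : BddAbove T' := by
    have hI : (⋂ n : ℕ, Set.Ici ((n : ℝ))) = ∅ := by
      ext x
      simp only [Set.mem_iInter, Set.mem_Ici, Set.mem_empty_iff_false, iff_false, not_forall,
        not_le]
      obtain ⟨n, hn⟩ := exists_nat_gt x
      exact ⟨n, hn⟩
    have hdir : Directed (· ⊇ ·) fun n : ℕ => Set.Ici ((n : ℝ)) := by
      intro i j
      refine ⟨max i j, Set.Ici_subset_Ici.2 ?_, Set.Ici_subset_Ici.2 ?_⟩ <;>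
        exact_mod_cast le_max_iff.2 (by omega)
    have hinf : ν (⋂ n : ℕ, Set.Ici ((n : ℝ))) = ⨅ n : ℕ, ν (Set.Ici ((n : ℝ))) :=
      Directed.measure_iInter (fun n => measurableSet_Ici.nullMeasurableSet) hdir
        ⟨0, hν_fin _⟩
    have : (⨅ n : ℕ, ν (Set.Ici ((n : ℝ)))) < κ2 := by
      rw [← hinf, hI, measure_empty]; exact hκ2pos
    obtain ⟨n, hn⟩ := iInf_lt_iff.1 this
    refine ⟨(n : ℝ), fun t ht => ?_⟩
    by_contra hlt
    push_neg at hlt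
    exact absurd (le_trans ht (measure_mono (Set.Ici_subset_Ici.2 hlt.le))) hn.not_ge
  set b := sSup T' with hb_def
  have hb : κ2 ≤ ν (Set.Ici b) := by
    have hIci : Set.Ici b = ⋂ n : ℕ, Set.Ici (b - 1 / ((n : ℝ) + 1)) := by
      ext x
      simp only [Set.mem_iInter, Set.mem_Ici]
      constructor
      · intro hx n
        have : (0 : ℝ) < 1 / ((n : ℝ) + 1) := by positivity
        linarith
      · intro hx
        by_contra hlt
        push_neg at hlt
        obtain ⟨n, hn⟩ := exists_nat_one_div_lt (sub_pos.2 hlt)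
        have := hx n
        linarith
    have hdir : Directed (· ⊇ ·) fun n : ℕ => Set.Ici (b - 1 / ((n : ℝ) + 1)) := by
      intro i j
      refine ⟨max i j, Set.Ici_subset_Ici.2 ?_, Set.Ici_subset_Ici.2 ?_⟩
      · have := one_div_succ_le (le_max_left i j); linarith
      · have := one_div_succ_le (le_max_right i j); linarith
    rw [hIci, Directed.measure_iInter (fun n => measurableSet_Ici.nullMeasurableSet) hdir
      ⟨0, hν_fin _⟩]
    refine le_iInf fun n => ?_
    have hlt : b - 1 / ((n : ℝ) + 1) < sSup T' := by
      rw [← hb_def]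
      have : (0 : ℝ) < 1 / ((n : ℝ) + 1) := by positivity
      linarith
    obtain ⟨t, htT, htlt⟩ := exists_lt_of_lt_csSup hT'_ne hlt
    exact le_trans htT (measure_mono (Set.Ici_subset_Ici.2 htlt.le))
  have hIoi : ν (Set.Ioi b) ≤ κ2 := by
    have hIoi_eq : Set.Ioi b = ⋃ n : ℕ, Set.Ici (b + 1 / ((n : ℝ) + 1)) := by
      ext x
      simp only [Set.mem_iUnion, Set.mem_Ici, Set.mem_Ioi]
      constructor
      · intro hx
        obtain ⟨n, hn⟩ := exists_nat_one_div_lt (sub_pos.2 hx)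
        exact ⟨n, by linarith⟩
      · rintro ⟨n, hn⟩
        have : (0 : ℝ) < 1 / ((n : ℝ) + 1) := by positivity
        linarith
    have hdir : Directed (· ⊆ ·) fun n : ℕ => Set.Ici (b + 1 / ((n : ℝ) + 1)) := by
      intro i j
      refine ⟨max i j, Set.Ici_subset_Ici.2 ?_, Set.Ici_subset_Ici.2 ?_⟩
      · have := one_div_succ_le (le_max_left i j); linarith
      · have := one_div_succ_le (le_max_right i j); linarith
    rw [hIoi_eq, Directed.measure_iUnion hdir]
    refine iSup_le fun n => ?_
    have hnotT : b + 1 / ((n : ℝ) + 1) ∉ T' := by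
      intro hmem
      have := le_csSup hT'_bdd hmem
      have hpos : (0 : ℝ) < 1 / ((n : ℝ) + 1) := by positivity
      rw [← hb_def] at this
      linarith
    exact (not_le.1 hnotT).le
  -- the interval [a, b] captures measure m - κ
  have hcover : (Set.univ : Set ℝ) ⊆ Set.Iio a ∪ (Set.Icc a b ∪ Set.Ioi b) := by
    intro x _
    by_cases h1 : x < a
    · exact Or.inl h1
    · by_cases h2 : x ≤ b
      · exact Or.inr (Or.inl ⟨not_lt.1 h1, h2⟩)
      · exact Or.inr (Or.inr (not_le.1 h2))
  have hIcc : m - ENNReal.ofReal κ ≤ ν (Set.Icc a b) := by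
    rw [tsub_le_iff_right]
    calc m = ν Set.univ := hν_univ.symm
      _ ≤ ν (Set.Iio a ∪ (Set.Icc a b ∪ Set.Ioi b)) := measure_mono hcover
      _ ≤ ν (Set.Iio a) + (ν (Set.Icc a b) + ν (Set.Ioi b)) :=
          le_trans (measure_union_le _ _) (add_le_add_right (measure_union_le _ _) _)
      _ ≤ κ2 + (ν (Set.Icc a b) + κ2) := add_le_add hIio (add_le_add_right hIoi _)
      _ = ν (Set.Icc a b) + ENNReal.ofReal κ := by rw [hκsum]; ring
  refine le_trans (iInf_le_of_le (Set.Icc a b) (iInf_le_of_le measurableSet_Icc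
    (iInf_le_of_le hIcc le_rfl))) ?_
  show Metric.ediam (Set.Icc a b) ≤ _
  rw [Real.ediam_Icc]
  by_cases hab : b ≤ a
  · rw [ENNReal.ofReal_eq_zero.2 (by linarith)]
    exact zero_le
  push_neg at hab
  have hμA' : ENNReal.ofReal (κ / 2) ≤ μ (f ⁻¹' Set.Iic a) := by
    rw [← Measure.map_apply hfm measurableSet_Iic]; exact ha
  have hμB' : ENNReal.ofReal (κ / 2) ≤ μ (f ⁻¹' Set.Ici b) := by
    rw [← Measure.map_apply hfm measurableSet_Ici]; exact hb
  refine le_trans ?_ (le_iSup_of_le (f ⁻¹' Set.Iic a) (le_iSup_of_le (f ⁻¹' Set.Ici b)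
    (le_iSup_of_le (hfm measurableSet_Iic) (le_iSup_of_le (hfm measurableSet_Ici)
    (le_iSup_of_le hμA' (le_iSup_of_le hμB' le_rfl))))))
  refine le_iInf₂ fun x hx => le_iInf₂ fun y hy => ?_
  have hx' : f x ≤ a := hx
  have hy' : b ≤ f y := hy
  have h1 : ENNReal.ofReal (b - a) ≤ edist (f x) (f y) := by
    rw [edist_dist, Real.dist_eq]
    refine ENNReal.ofReal_le_ofReal ?_
    calc b - a ≤ f y - f x := by linarith
      _ ≤ |f y - f x| := le_abs_self _
      _ = |f x - f y| := abs_sub_comm _ _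
  exact h1.trans (by simpa using hf x y)

/-- A sequence of mm-spaces is a Lévy family iff `Sep (X_n; κ, κ) → 0` for every `κ > 0`. -/
theorem isLevyFamily_iff_sep_tendsto_zero
    (X : ℕ → Type*) [∀ n, MetricSpace (X n)] [∀ n, CompleteSpace (X n)]
    [∀ n, TopologicalSpace.SeparableSpace (X n)]
    [∀ n, MeasurableSpace (X n)] [∀ n, BorelSpace (X n)]
    (μ : ∀ n, Measure (X n)) [∀ n, IsFiniteMeasure (μ n)] :
    IsLevyFamily X μ ↔
      ∀ κ : ℝ, 0 < κ → Tendsto (fun n => sep (μ n) κ κ) atTop (nhds 0) := by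
  constructor
  · intro h κ hκ
    exact tendsto_of_tendsto_of_tendsto_of_le_of_le tendsto_const_nhds
      (h (κ / 2) (by linarith)) (fun n => zero_le)
      (fun n => sep_le_obsDiam (μ n) (by linarith) (by linarith))
  · intro h κ hκ
    exact tendsto_of_tendsto_of_tendsto_of_le_of_le tendsto_const_nhds
      (h (κ / 2) (by linarith)) (fun n => zero_le)
      (fun n => obsDiam_le_sep (μ n) hκ)
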